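/- Let X = {x_1,...,x_a} and X' = {x'_1,...,x'_a} be disjoint alphabets and u_1,...,u_a formal variables. With v_k := (-1)^{k-1} Σ_{l=k}^{a} e_{l-k}(X) u_l and h_l(X−X') := Σ_{p+q=l} (-1)^q h_p(X) e_q(X'), one has in k[X,X',u_1,...,u_a]: Σ_{l=1}^{a} (e_l(X) − e_l(X')) u_l = Σ_{l=1}^{a} h_l(X−X') v_l. -/

import Mathlib

open Finset

variable {R : Type*} [CommRing R]

/-- The elementary symmetric polynomial `e k` of a finite family of ring elements. -/
def esym {ι : Type*} [Fintype ι] [DecidableEq ι] (x : ι → R) (k : ℕ) : R :=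
  ∑ s ∈ Finset.univ.powersetCard k, ∏ i ∈ s, x i

/-- The complete homogeneous symmetric polynomial `h k` of a finite family of ring
elements (sum of all monomials of degree `k`). -/
def hsym {ι : Type*} [Fintype ι] [DecidableEq ι] (x : ι → R) (k : ℕ) : R :=
  ∑ μ : Sym ι k, (μ.1.map x).prod

/-- The hook Schur polynomial `s(i,j) = s_{(i+1,1^j)}` of a finite family. -/
def hookS {ι : Type*} [Fintype ι] [DecidableEq ι] (x : ι → R) (i j : ℕ) : R :=
  ∑ p ∈ Finset.HasAntidiagonal.antidiagonal j, (-1 : R) ^ p.1 * hsym x (i + p.1 + 1) * esym x p.2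

/-- The complete symmetric function `h j` of the difference alphabet `X - X'`. -/
def hdiff {ι κ : Type*} [Fintype ι] [DecidableEq ι] [Fintype κ] [DecidableEq κ]
    (x : ι → R) (x' : κ → R) (j : ℕ) : R :=
  ∑ p ∈ Finset.HasAntidiagonal.antidiagonal j, (-1 : R) ^ p.2 * hsym x p.1 * esym x' p.2

/-- The elementary symmetric function `e j` of the difference alphabet `X - X'`. -/
def ediff {ι κ : Type*} [Fintype ι] [DecidableEq ι] [Fintype κ] [DecidableEq κ]
    (x : ι → R) (x' : κ → R) (j : ℕ) : R :=
  ∑ p ∈ Finset.HasAntidiagonal.antidiagonal j, (-1 : R) ^ p.2 * esym x p.1 * hsym x' p.2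

/-- The power sum `p k` of a finite family of ring elements. -/
def psum' {ι : Type*} [Fintype ι] (x : ι → R) (k : ℕ) : R :=
  ∑ i, x i ^ k

/-- The elementary symmetric polynomial of a multiset of ring elements. -/
def esymM (s : Multiset R) (k : ℕ) : R :=
  ((s.powersetCard k).map Multiset.prod).sum

/-!
Write `E_X(t) = ∏ (1 + x_i t)` and `H_X(t) = ∏ (1 - x_i t)⁻¹`, the generating series of the
`e_k(X)` and `h_k(X)`, so that `H_X(t) E_X(-t) = 1` and `h_k(X - X')` is the `k`-th coefficient of
`H_X(t) E_{X'}(-t)`. Multiplying the latter by `E_X(-t)` leaves `E_{X'}(-t)`; after `t ↦ -t` the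
coefficients of this identity read `∑_k (-1)^k h_k(X - X') e_{l-k}(X) = e_l(X')`, i.e.
`e_l(X) - e_l(X') = ∑_{k ≥ 1} (-1)^(k-1) h_k(X - X') e_{l-k}(X)`. Multiplying by `u_l`, summing
over `l` and exchanging the two sums gives `∑_k h_k(X - X') v_k`.
-/

theorem esym_zero {ι : Type*} [Fintype ι] [DecidableEq ι] (x : ι → R) : esym x 0 = 1 := by
  simp [esym]

theorem hsym_zero {ι : Type*} [Fintype ι] [DecidableEq ι] (x : ι → R) : hsym x 0 = 1 := by
  simp [hsym, Sym.eq_nil_of_card_zero]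

theorem hdiff_zero {ι κ : Type*} [Fintype ι] [DecidableEq ι] [Fintype κ] [DecidableEq κ]
    (x : ι → R) (x' : κ → R) : hdiff x x' 0 = 1 := by
  simp [hdiff, hsym_zero, esym_zero]

namespace PowerSeries

theorem rescale_C {S : Type*} [CommSemiring S] (a r : S) : rescale a (C r) = C r := by
  ext (_ | n) <;> simp [coeff_C]

theorem mk_pow_mul_one_sub_C_mul_X (r : R) : (mk fun n => r ^ n) * (1 - C r * X) = 1 := by
  simpa [rescale_mk, rescale_X] using congrArg (rescale r) (mk_one_mul_one_sub_eq_one R)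

theorem rescale_neg_one_rescale_neg_one (f : R⟦X⟧) : rescale (-1) (rescale (-1) f) = f := by
  rw [rescale_rescale, mul_neg_one, neg_neg, rescale_one, RingHom.id_apply]

variable {ι κ : Type*} [Fintype ι] [Fintype κ]

noncomputable def esymSeries (x : ι → R) : R⟦X⟧ :=
  ∏ i, (1 + C (x i) * X)

noncomputable def hsymSeries (x : ι → R) : R⟦X⟧ :=
  ∏ i, mk fun n => x i ^ n

theorem hsymSeries_mul_rescale_neg_one_esymSeries (x : ι → R) :
    hsymSeries x * rescale (-1) (esymSeries x) = 1 := by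
  simp_rw [hsymSeries, esymSeries, map_prod, map_add, map_one, map_mul, rescale_C,
    rescale_neg_one_X, ← prod_mul_distrib, mul_neg, ← sub_eq_add_neg,
    mk_pow_mul_one_sub_C_mul_X, prod_const_one]

variable [DecidableEq ι] [DecidableEq κ]

theorem coeff_esymSeries (x : ι → R) (q : ℕ) : coeff q (esymSeries x) = esym x q := by
  simp_rw [esymSeries, prod_one_add, prod_mul_distrib, prod_const, ← map_prod, map_sum,
    coeff_C_mul_X_pow, esym, powersetCard_eq_filter, sum_filter, eq_comm]

theorem coeff_hsymSeries (x : ι → R) (p : ℕ) : coeff p (hsymSeries x) = hsym x p := by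
  rw [hsymSeries, coeff_prod, hsym]
  refine sum_bij' (fun l hl => ⟨Finsupp.toMultiset l, ?_⟩) (fun μ _ => Multiset.toFinsupp μ.1)
    (fun _ _ => mem_univ _) (fun μ _ => ?_) (fun l _ => Finsupp.toMultiset_toFinsupp l)
    (fun μ _ => Subtype.ext (Multiset.toFinsupp_toMultiset _)) (fun l _ => ?_)
  · rw [Finsupp.card_toMultiset, Finsupp.sum_fintype _ _ fun _ => rfl]
    exact (mem_finsuppAntidiag.mp hl).1
  · refine mem_finsuppAntidiag.mpr ⟨?_, subset_univ _⟩
    exact (Multiset.sum_count_eq_card fun _ _ => mem_univ _).trans μ.2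
  · rw [prod_multiset_map_count, Finsupp.toFinset_toMultiset]
    simp_rw [coeff_mk, Finsupp.count_toMultiset]
    exact (Finsupp.prod_fintype _ _ fun _ => pow_zero _).symm

theorem hdiff_eq_coeff (x : ι → R) (x' : κ → R) (k : ℕ) :
    hdiff x x' k = coeff k (hsymSeries x * rescale (-1) (esymSeries x')) := by
  rw [coeff_mul, hdiff]
  refine sum_congr rfl fun p _ => ?_
  rw [coeff_rescale, coeff_hsymSeries, coeff_esymSeries]
  ring

end PowerSeries

open PowerSeries

variable {ι κ : Type*} [Fintype ι] [DecidableEq ι] [Fintype κ] [DecidableEq κ]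

theorem sum_antidiagonal_neg_one_pow_mul_hdiff_mul_esym (x : ι → R) (x' : κ → R) (l : ℕ) :
    ∑ p ∈ antidiagonal l, (-1) ^ p.1 * hdiff x x' p.1 * esym x p.2 = esym x' l := by
  have hser : rescale (-1) (hsymSeries x * rescale (-1) (esymSeries x')) * esymSeries x =
      esymSeries x' := by
    rw [← rescale_neg_one_rescale_neg_one (esymSeries x), ← map_mul, mul_right_comm,
      hsymSeries_mul_rescale_neg_one_esymSeries, one_mul, rescale_neg_one_rescale_neg_one]
  rw [← coeff_esymSeries, ← hser, coeff_mul]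
  simp_rw [coeff_rescale, hdiff_eq_coeff, coeff_esymSeries]

theorem esym_sub_esym_eq_sum (x : ι → R) (x' : κ → R) (l : ℕ) :
    esym x l - esym x' l = ∑ k ∈ Icc 1 l, (-1) ^ (k - 1) * hdiff x x' k * esym x (l - k) := by
  rw [← sum_antidiagonal_neg_one_pow_mul_hdiff_mul_esym x x' l,
    Nat.sum_antidiagonal_eq_sum_range_succ (fun i j => (-1) ^ i * hdiff x x' i * esym x j),
    range_eq_Ico, sum_eq_sum_Ico_succ_bot l.succ_pos, zero_add, Nat.succ_eq_add_one,
    Ico_add_one_right_eq_Icc, hdiff_zero, pow_zero, one_mul, one_mul, Nat.sub_zero,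
    sub_add_cancel_left, ← sum_neg_distrib]
  refine sum_congr rfl fun k hk => ?_
  obtain ⟨j, rfl⟩ := Nat.exists_eq_add_of_le' (mem_Icc.mp hk).1
  simp [pow_succ]

theorem curvature_change_of_variables (a : ℕ) (x x' : Fin a → R) (u v : ℕ → R)
    (hv : ∀ k ∈ Finset.Icc 1 a,
      v k = (-1 : R) ^ (k - 1) * ∑ l ∈ Finset.Icc k a, esym x (l - k) * u l) :
    ∑ l ∈ Finset.Icc 1 a, (esym x l - esym x' l) * u l =
      ∑ l ∈ Finset.Icc 1 a, hdiff x x' l * v l := by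
  calc ∑ l ∈ Icc 1 a, (esym x l - esym x' l) * u l
      = ∑ l ∈ Icc 1 a, ∑ k ∈ Icc 1 l,
          (-1) ^ (k - 1) * hdiff x x' k * esym x (l - k) * u l := by
        simp_rw [esym_sub_esym_eq_sum x x', sum_mul]
    _ = ∑ k ∈ Icc 1 a, ∑ l ∈ Icc k a,
          (-1) ^ (k - 1) * hdiff x x' k * esym x (l - k) * u l :=
        sum_comm' fun l k => by simp only [mem_Icc]; omega
    _ = ∑ k ∈ Icc 1 a, hdiff x x' k * v k := sum_congr rfl fun k hk => by
        rw [hv k hk, mul_sum, mul_sum]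
        exact sum_congr rfl fun l _ => by ring
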